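/- Let H be a thick spider with partition (S, K, R) such that the subgraph of H induced by R is P4-sparse, let u ∈ R, and let uw be a tail added to H (w ∉ V(H)). Then every P4-sparse completion of H+uw contains at least |K| fill edges having at least one endpoint in S ∪ K. -/

import Mathlib

open SimpleGraph Set

variable {α : Type*}

/-- The graph `G + uw` obtained from `G` by adding the tail edge `uw`. -/
def addTail (G : SimpleGraph α) (u w : α) : SimpleGraph α :=
  G ⊔ SimpleGraph.fromEdgeSet {s(u, w)}

/-- The number of fill edges of a completion `G'` of the base graph `base`:
the edges of `G'` that are not edges of `base`. -/
noncomputable def fillCount (base G' : SimpleGraph α) : ℕ :=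
  (G'.edgeSet \ base.edgeSet).ncard

/-- `S` is an independent set of the graph `G`. -/
def IsIndepSetOn (G : SimpleGraph α) (S : Set α) : Prop :=
  ∀ x ∈ S, ∀ y ∈ S, ¬ G.Adj x y

/-- A graph is split if its vertex set can be partitioned into a clique and an
independent set. -/
def IsSplitGraph (G : SimpleGraph α) : Prop :=
  ∃ K S : Set α, K ∪ S = Set.univ ∧ Disjoint K S ∧ G.IsClique K ∧ IsIndepSetOn G S

/-- `a b c d` (in this order) induce a chordless path `P₄` in `G`. -/
def IsInducedP4 (G : SimpleGraph α) (a b c d : α) : Prop :=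
  a ≠ b ∧ a ≠ c ∧ a ≠ d ∧ b ≠ c ∧ b ≠ d ∧ c ≠ d ∧
  G.Adj a b ∧ G.Adj b c ∧ G.Adj c d ∧ ¬ G.Adj a c ∧ ¬ G.Adj a d ∧ ¬ G.Adj b d

/-- `a b c d` (in this order) induce a chordless cycle `C₄` in `G`. -/
def IsInducedC4 (G : SimpleGraph α) (a b c d : α) : Prop :=
  a ≠ b ∧ a ≠ c ∧ a ≠ d ∧ b ≠ c ∧ b ≠ d ∧ c ≠ d ∧
  G.Adj a b ∧ G.Adj b c ∧ G.Adj c d ∧ G.Adj d a ∧ ¬ G.Adj a c ∧ ¬ G.Adj b d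

/-- `a b c d` induce a `2K₂` (two independent edges `ab` and `cd`) in `G`. -/
def IsInduced2K2 (G : SimpleGraph α) (a b c d : α) : Prop :=
  a ≠ b ∧ a ≠ c ∧ a ≠ d ∧ b ≠ c ∧ b ≠ d ∧ c ≠ d ∧
  G.Adj a b ∧ G.Adj c d ∧ ¬ G.Adj a c ∧ ¬ G.Adj a d ∧ ¬ G.Adj b c ∧ ¬ G.Adj b d

/-- A graph is threshold iff it has no induced `C₄`, `P₄`, or `2K₂`. -/
def IsThresholdGraph (G : SimpleGraph α) : Prop :=
  (∀ a b c d, ¬ IsInducedC4 G a b c d) ∧ (∀ a b c d, ¬ IsInducedP4 G a b c d) ∧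
  (∀ a b c d, ¬ IsInduced2K2 G a b c d)

/-- A graph is quasi-threshold iff it has no induced `C₄` or `P₄`. -/
def IsQuasiThresholdGraph (G : SimpleGraph α) : Prop :=
  (∀ a b c d, ¬ IsInducedC4 G a b c d) ∧ (∀ a b c d, ¬ IsInducedP4 G a b c d)

/-- `t` is the vertex set of an induced `P₄` of `G`. -/
def IsP4SetOn (G : SimpleGraph α) (t : Set α) : Prop :=
  ∃ a b c d : α, t = {a, b, c, d} ∧ IsInducedP4 G a b c d

/-- A graph is `P₄`-sparse iff every set of five vertices induces at most one `P₄`. -/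
def IsP4Sparse (G : SimpleGraph α) : Prop :=
  ∀ s : Set α, s.ncard = 5 →
    ∀ t₁ ⊆ s, ∀ t₂ ⊆ s, IsP4SetOn G t₁ → IsP4SetOn G t₂ → t₁ = t₂

/-- The subgraph of `H` induced by the set `R` (as a graph on the same vertex type,
all vertices outside `R` being isolated). -/
def restrictSet (H : SimpleGraph α) (R : Set α) : SimpleGraph α where
  Adj x y := H.Adj x y ∧ x ∈ R ∧ y ∈ R
  symm := by
    first
    | exact fun x y ⟨h, hx, hy⟩ => ⟨h.symm, hy, hx⟩
    | exact ⟨fun x y ⟨h, hx, hy⟩ => ⟨h.symm, hy, hx⟩⟩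
  loopless := ⟨fun x h => H.loopless.irrefl x h.1⟩

/-- `(S, K, R)` is a thin-spider partition of (the vertex set of) `H`. -/
def ThinSpider (H : SimpleGraph α) (S K R : Set α) : Prop :=
  IsIndepSetOn H S ∧ H.IsClique K ∧ S.ncard = K.ncard ∧ 2 ≤ K.ncard ∧
  Disjoint S K ∧ Disjoint S R ∧ Disjoint K R ∧
  (∀ r ∈ R, ∀ k ∈ K, H.Adj r k) ∧ (∀ r ∈ R, ∀ s ∈ S, ¬ H.Adj r s) ∧
  ∃ f : α → α, Set.BijOn f S K ∧ ∀ s ∈ S, ∀ k ∈ K, (H.Adj s k ↔ k = f s)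

/-- `(S, K, R)` is a thick-spider partition of (the vertex set of) `H`;
thick spiders are assumed to have `|K| ≥ 3`. -/
def ThickSpider (H : SimpleGraph α) (S K R : Set α) : Prop :=
  IsIndepSetOn H S ∧ H.IsClique K ∧ S.ncard = K.ncard ∧ 3 ≤ K.ncard ∧
  Disjoint S K ∧ Disjoint S R ∧ Disjoint K R ∧
  (∀ r ∈ R, ∀ k ∈ K, H.Adj r k) ∧ (∀ r ∈ R, ∀ s ∈ S, ¬ H.Adj r s) ∧
  ∃ f : α → α, Set.BijOn f S K ∧ ∀ s ∈ S, ∀ k ∈ K, (H.Adj s k ↔ k ≠ f s)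

/-- The set of possible numbers of fill edges of completions of `base` into the
graph class `C`. -/
def completionFills (C : SimpleGraph α → Prop) (base : SimpleGraph α) : Set ℕ :=
  {n | ∃ G' : SimpleGraph α, base ≤ G' ∧ C G' ∧ fillCount base G' = n}

/-!
Let `B` be the set of clique vertices that are not adjacent to `w` in the completion. Every
`k ∈ K \ B` gives the fill edge `kw`, so it suffices to find `|B|` fill edges at the legs `S`.
They come from P₄-sparseness, applied to pairs of induced P₄s on five vertices that start with
the edge `wu`: if `|B| ≥ 3`, every leg is joined to `u` or `w`; if `|B| = 1`, one of any two
legs is. If `|B| = 2`, the leg `σ` with `f σ ∉ B` is joined to some `x ∈ {u, w}`, and for a leg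
`s` with `f s ∈ B` the two paths `s - f σ - x - σ` and `s - f σ - f s - σ` force a second fill
edge at `s` or `σ`.
-/

lemma isInducedP4_of_adj {G : SimpleGraph α} {a b c d : α} (hab : G.Adj a b) (hbc : G.Adj b c)
    (hcd : G.Adj c d) (hac : ¬ G.Adj a c) (had : ¬ G.Adj a d) (hbd : ¬ G.Adj b d) :
    IsInducedP4 G a b c d :=
  ⟨hab.ne, by rintro rfl; exact had hcd, by rintro rfl; exact hbd hab.symm, hbc.ne,
    by rintro rfl; exact had hab, hcd.ne, hab, hbc, hcd, hac, had, hbd⟩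

lemma ncard_eq_five {a b c d e : α} (hab : a ≠ b) (hac : a ≠ c) (had : a ≠ d) (hae : a ≠ e)
    (hbc : b ≠ c) (hbd : b ≠ d) (hbe : b ≠ e) (hcd : c ≠ d) (hce : c ≠ e) (hde : d ≠ e) :
    ({a, b, c, d, e} : Set α).ncard = 5 := by
  rw [ncard_insert_of_notMem (by simp [hab, hac, had, hae]),
    ncard_insert_of_notMem (by simp [hbc, hbd, hbe]), ncard_insert_of_notMem (by simp [hcd, hce]),
    ncard_pair hde]

namespace IsP4Sparse

variable {G : SimpleGraph α} {a b c d e : α}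

lemma false_of_isInducedP4_of_ne_last (hG : IsP4Sparse G) (h₁ : IsInducedP4 G a b c d)
    (h₂ : IsInducedP4 G a b c e) (hde : d ≠ e) : False := by
  have hcard := ncard_eq_five h₁.1 h₁.2.1 h₁.2.2.1 h₂.2.2.1 h₁.2.2.2.1 h₁.2.2.2.2.1 h₂.2.2.2.2.1
    h₁.2.2.2.2.2.1 h₂.2.2.2.2.2.1 hde
  have heq := hG _ hcard {a, b, c, d} (by intro x; simp; tauto) {a, b, c, e}
    (by intro x; simp; tauto) ⟨a, b, c, d, rfl, h₁⟩ ⟨a, b, c, e, rfl, h₂⟩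
  have hd : d ∈ ({a, b, c, e} : Set α) := heq ▸ by simp
  simp [h₁.2.2.1.symm, h₁.2.2.2.2.1.symm, h₁.2.2.2.2.2.1.symm, hde] at hd

lemma false_of_isInducedP4_of_ne_third (hG : IsP4Sparse G) (h₁ : IsInducedP4 G a b c d)
    (h₂ : IsInducedP4 G a b e d) (hce : c ≠ e) : False := by
  have hcard := ncard_eq_five h₁.1 h₁.2.1 h₁.2.2.1 h₂.2.1 h₁.2.2.2.1 h₁.2.2.2.2.1 h₂.2.2.2.1
    h₁.2.2.2.2.2.1 hce h₂.2.2.2.2.2.1.symm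
  have heq := hG _ hcard {a, b, c, d} (by intro x; simp; tauto) {a, b, e, d}
    (by intro x; simp; tauto) ⟨a, b, c, d, rfl, h₁⟩ ⟨a, b, e, d, rfl, h₂⟩
  have hc : c ∈ ({a, b, e, d} : Set α) := heq ▸ by simp
  simp [h₁.2.1.symm, h₁.2.2.2.1.symm, h₁.2.2.2.2.2.1, hce] at hc

lemma adj_or_adj_of_two_common_neighbors {u w s k₁ k₂ : α} (hG : IsP4Sparse G)
    (hwu : G.Adj w u) (huk₁ : G.Adj u k₁) (huk₂ : G.Adj u k₂) (hk₁s : G.Adj k₁ s)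
    (hk₂s : G.Adj k₂ s) (hwk₁ : ¬ G.Adj w k₁) (hwk₂ : ¬ G.Adj w k₂) (hk : k₁ ≠ k₂) :
    G.Adj w s ∨ G.Adj u s := by
  by_contra! h
  exact hG.false_of_isInducedP4_of_ne_third (isInducedP4_of_adj hwu huk₁ hk₁s hwk₁ h.1 h.2)
    (isInducedP4_of_adj hwu huk₂ hk₂s hwk₂ h.1 h.2) hk

lemma adj_or_adj_of_two_neighbors {u w k s₁ s₂ : α} (hG : IsP4Sparse G) (hwu : G.Adj w u)
    (huk : G.Adj u k) (hks₁ : G.Adj k s₁) (hks₂ : G.Adj k s₂) (hwk : ¬ G.Adj w k)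
    (hs : s₁ ≠ s₂) : G.Adj w s₁ ∨ G.Adj u s₁ ∨ G.Adj w s₂ ∨ G.Adj u s₂ := by
  by_contra! h
  exact hG.false_of_isInducedP4_of_ne_last (isInducedP4_of_adj hwu huk hks₁ hwk h.1 h.2.1)
    (isInducedP4_of_adj hwu huk hks₂ hwk h.2.2.1 h.2.2.2) hs

lemma adj_or_adj_or_adj_or_adj_of_two_paths {s s' k k' x : α} (hG : IsP4Sparse G)
    (hs'k : G.Adj s' k)
    (hkx : G.Adj k x) (hxs : G.Adj x s) (hkk' : G.Adj k k') (hk's : G.Adj k' s) (hx : x ≠ k') :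
    G.Adj s' x ∨ G.Adj s' s ∨ G.Adj k s ∨ G.Adj s' k' := by
  by_contra! h
  exact hG.false_of_isInducedP4_of_ne_third (isInducedP4_of_adj hs'k hkx hxs h.1 h.2.1 h.2.2.1)
    (isInducedP4_of_adj hs'k hkk' hk's h.2.2.2 h.2.1 h.2.2.1) hx

end IsP4Sparse

lemma ncard_le_ncard_of_forall_exists_mk_mem {S : Set α} {E : Set (Sym2 α)} (hE : E.Finite)
    (h : ∀ s ∈ S, ∃ x ∉ S, s(s, x) ∈ E) : S.ncard ≤ E.ncard := by
  choose! x hxS hxE using h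
  refine ncard_le_ncard_of_injOn (fun s => s(s, x s)) hxE (fun s hs t ht hst => ?_) hE
  have hst : s ∈ s(t, x t) := by simpa only [← hst] using Sym2.mem_mk_left s (x s)
  rcases Sym2.mem_iff.mp hst with rfl | rfl
  · rfl
  · exact absurd hs (hxS t ht)

/-- What a completion `G` of `H + uw` retains of a thick spider `H` (legs `S`, clique `K`, leg
matching `f`, `u` in the body): all its edges, but none of its non-edges. -/
structure ContainsTailedThickSpider (G : SimpleGraph α) (S K : Set α) (f : α → α) (u w : α) :
    Prop where
  bijOn : BijOn f S K
  three_le_ncard : 3 ≤ K.ncard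
  adj_of_ne : ∀ s ∈ S, ∀ k ∈ K, k ≠ f s → G.Adj s k
  isClique : G.IsClique K
  adj_head : ∀ k ∈ K, G.Adj u k
  adj_tail : G.Adj w u
  disjoint : Disjoint S K
  head_notMem : u ∉ S
  tail_notMem : w ∉ S ∪ K

namespace ContainsTailedThickSpider

variable {G : SimpleGraph α} {S K : Set α} {f : α → α} {u w : α} {E : Set (Sym2 α)}

lemma adj_or_adj_of_two_lt_ncard (hT : ContainsTailedThickSpider G S K f u w)
    (hG : IsP4Sparse G) (hB : 2 < (K \ G.neighborSet w).ncard) {s : α} (hs : s ∈ S) :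
    G.Adj w s ∨ G.Adj u s := by
  have h : 1 < ((K \ G.neighborSet w) \ {f s}).ncard := by
    have := pred_ncard_le_ncard_sdiff_singleton (K \ G.neighborSet w) (f s); omega
  obtain ⟨k₁, ⟨⟨hk₁, hwk₁⟩, hfk₁⟩, k₂, ⟨⟨hk₂, hwk₂⟩, hfk₂⟩, hne⟩ :=
    (one_lt_ncard (finite_of_ncard_pos (by omega))).mp h
  exact hG.adj_or_adj_of_two_common_neighbors hT.adj_tail (hT.adj_head k₁ hk₁)
    (hT.adj_head k₂ hk₂) (hT.adj_of_ne s hs k₁ hk₁ hfk₁).symm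
    (hT.adj_of_ne s hs k₂ hk₂ hfk₂).symm hwk₁ hwk₂ hne

lemma nonempty_of_ncard_eq_one (hT : ContainsTailedThickSpider G S K f u w)
    (hG : IsP4Sparse G)
    (hE : ∀ s ∈ S, ∀ x, G.Adj s x → x = u ∨ x = w ∨ x ∈ S ∨ x = f s → s(s, x) ∈ E)
    (hB : (K \ G.neighborSet w).ncard = 1) : E.Nonempty := by
  obtain ⟨k, hB⟩ := ncard_eq_one.mp hB
  obtain ⟨hk, hwk⟩ : k ∈ K \ G.neighborSet w := hB ▸ mem_singleton k
  obtain ⟨s₀, hs₀, rfl⟩ := hT.bijOn.surjOn hk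
  have hS : 1 < (S \ {s₀}).ncard := by
    have := pred_ncard_le_ncard_sdiff_singleton S s₀
    have := hT.bijOn.ncard_eq
    have := hT.three_le_ncard
    omega
  obtain ⟨s₁, ⟨hs₁, hs₁₀⟩, s₂, ⟨hs₂, hs₂₀⟩, hne⟩ :=
    (one_lt_ncard (finite_of_ncard_pos (by omega))).mp hS
  have hadj : ∀ s ∈ S, s ≠ s₀ → G.Adj (f s₀) s := fun s hs hss₀ =>
    (hT.adj_of_ne s hs _ hk fun h => hss₀ (hT.bijOn.injOn hs₀ hs h).symm).symm
  rcases hG.adj_or_adj_of_two_neighbors hT.adj_tail (hT.adj_head _ hk) (hadj s₁ hs₁ hs₁₀)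
    (hadj s₂ hs₂ hs₂₀) hwk hne with h | h | h | h
  exacts [⟨_, hE s₁ hs₁ w h.symm (.inr (.inl rfl))⟩, ⟨_, hE s₁ hs₁ u h.symm (.inl rfl)⟩,
    ⟨_, hE s₂ hs₂ w h.symm (.inr (.inl rfl))⟩, ⟨_, hE s₂ hs₂ u h.symm (.inl rfl)⟩]

lemma notMem_union_of_eq_or_eq (hT : ContainsTailedThickSpider G S K f u w) {x : α}
    (hx : x = u ∨ x = w) : x ∉ S ∪ K := by
  rcases hx with rfl | rfl
  · rintro (h | h)
    exacts [hT.head_notMem h, (hT.adj_head x h).ne rfl]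
  · exact hT.tail_notMem

lemma exists_mem_ne_of_adj (hT : ContainsTailedThickSpider G S K f u w) (hG : IsP4Sparse G)
    (hE : ∀ s ∈ S, ∀ x, G.Adj s x → x = u ∨ x = w ∨ x ∈ S ∨ x = f s → s(s, x) ∈ E)
    {s σ x : α} (hs : s ∈ S) (hσ : σ ∈ S) (hsσ : s ≠ σ) (hx : x = u ∨ x = w)
    (hσx : G.Adj σ x) (hfσx : G.Adj (f σ) x) : ∃ e ∈ E, e ≠ s(σ, x) := by
  have hxSK := hT.notMem_union_of_eq_or_eq hx
  have hfs := hT.bijOn.mapsTo hs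
  have hfσ := hT.bijOn.mapsTo hσ
  have hf : f s ≠ f σ := fun h => hsσ (hT.bijOn.injOn hs hσ h)
  have hs_e : s ∉ s(σ, x) := by
    simp only [Sym2.mem_iff, not_or]
    exact ⟨hsσ, fun h => hxSK (.inl (h ▸ hs))⟩
  rcases hG.adj_or_adj_or_adj_or_adj_of_two_paths (hT.adj_of_ne s hs _ hfσ hf.symm) hfσx
    hσx.symm (hT.isClique hfσ hfs hf.symm) (hT.adj_of_ne σ hσ _ hfs hf).symm
    (fun h => hxSK (.inr (h ▸ hfs))) with h | h | h | h
  · exact ⟨_, hE s hs x h (hx.imp_right .inl), ne_of_mem_of_not_mem' (Sym2.mem_mk_left s x) hs_e⟩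
  · exact ⟨_, hE s hs σ h (.inr (.inr (.inl hσ))),
      ne_of_mem_of_not_mem' (Sym2.mem_mk_left s σ) hs_e⟩
  · refine ⟨_, hE σ hσ (f σ) h.symm (.inr (.inr (.inr rfl))),
      ne_of_mem_of_not_mem' (Sym2.mem_mk_right σ (f σ)) ?_⟩
    simp only [Sym2.mem_iff, not_or]
    exact ⟨h.ne, hfσx.ne⟩
  · exact ⟨_, hE s hs (f s) h (.inr (.inr (.inr rfl))),
      ne_of_mem_of_not_mem' (Sym2.mem_mk_left s (f s)) hs_e⟩

lemma exists_ne_of_ncard_eq_two (hT : ContainsTailedThickSpider G S K f u w)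
    (hG : IsP4Sparse G)
    (hE : ∀ s ∈ S, ∀ x, G.Adj s x → x = u ∨ x = w ∨ x ∈ S ∨ x = f s → s(s, x) ∈ E)
    (hB : (K \ G.neighborSet w).ncard = 2) : ∃ e₁ ∈ E, ∃ e₂ ∈ E, e₁ ≠ e₂ := by
  obtain ⟨k₁, k₂, hk, hB'⟩ := ncard_eq_two.mp hB
  obtain ⟨hk₁, hwk₁⟩ : k₁ ∈ K \ G.neighborSet w := hB' ▸ mem_insert k₁ {k₂}
  obtain ⟨hk₂, hwk₂⟩ : k₂ ∈ K \ G.neighborSet w := hB' ▸ mem_insert_of_mem k₁ rfl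
  obtain ⟨k₃, hk₃, hk₃B⟩ := exists_mem_notMem_of_ncard_lt_ncard (s := K \ G.neighborSet w)
    (t := K) (by have := hT.three_le_ncard; omega) (hB' ▸ toFinite _)
  have hwk₃ : G.Adj w k₃ := by_contra fun h => hk₃B ⟨hk₃, h⟩
  rw [hB'] at hk₃B
  obtain ⟨σ, hσ, rfl⟩ := hT.bijOn.surjOn hk₃
  obtain ⟨s, hs, rfl⟩ := hT.bijOn.surjOn hk₁
  have hσwu : G.Adj w σ ∨ G.Adj u σ := hG.adj_or_adj_of_two_common_neighbors hT.adj_tail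
    (hT.adj_head _ hk₁) (hT.adj_head _ hk₂)
    (hT.adj_of_ne σ hσ _ hk₁ fun h => hk₃B (.inl h.symm)).symm
    (hT.adj_of_ne σ hσ _ hk₂ fun h => hk₃B (.inr h.symm)).symm hwk₁ hwk₂ hk
  obtain ⟨x, hx, hσx, hfσx⟩ : ∃ x, (x = u ∨ x = w) ∧ G.Adj σ x ∧ G.Adj (f σ) x :=
    hσwu.elim (fun h => ⟨w, .inr rfl, h.symm, hwk₃.symm⟩)
      (fun h => ⟨u, .inl rfl, h.symm, (hT.adj_head _ hk₃).symm⟩)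
  have hsσ : s ≠ σ := by rintro rfl; exact hk₃B (.inl rfl)
  obtain ⟨e, he, hne⟩ := hT.exists_mem_ne_of_adj hG hE hs hσ hsσ hx hσx hfσx
  exact ⟨_, hE σ hσ x hσx (hx.imp_right .inl), e, he, hne.symm⟩

lemma ncard_sdiff_neighborSet_le (hT : ContainsTailedThickSpider G S K f u w)
    (hG : IsP4Sparse G) (hEfin : E.Finite)
    (hE : ∀ s ∈ S, ∀ x, G.Adj s x → x = u ∨ x = w ∨ x ∈ S ∨ x = f s → s(s, x) ∈ E) :
    (K \ G.neighborSet w).ncard ≤ E.ncard := by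
  obtain hB | hB | hB | hB : (K \ G.neighborSet w).ncard = 0 ∨ (K \ G.neighborSet w).ncard = 1 ∨
      (K \ G.neighborSet w).ncard = 2 ∨ 2 < (K \ G.neighborSet w).ncard := by omega
  · simp [hB]
  · rw [hB]; exact (ncard_pos hEfin).mpr (hT.nonempty_of_ncard_eq_one hG hE hB)
  · rw [hB]; exact (one_lt_ncard hEfin).mpr (hT.exists_ne_of_ncard_eq_two hG hE hB)
  · have hK : K.Finite := finite_of_ncard_pos (by have := hT.three_le_ncard; omega)
    calc (K \ G.neighborSet w).ncard ≤ K.ncard := ncard_le_ncard sdiff_subset hK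
      _ = S.ncard := hT.bijOn.ncard_eq.symm
      _ ≤ E.ncard := ncard_le_ncard_of_forall_exists_mk_mem hEfin fun s hs =>
        (hT.adj_or_adj_of_two_lt_ncard hG hB hs).elim
          (fun h => ⟨w, fun h' => hT.tail_notMem (.inl h'), hE s hs w h.symm (.inr (.inl rfl))⟩)
          (fun h => ⟨u, hT.head_notMem, hE s hs u h.symm (.inl rfl)⟩)

theorem ncard_clique_le (hT : ContainsTailedThickSpider G S K f u w) (hG : IsP4Sparse G)
    (hEfin : E.Finite)
    (hE : ∀ s ∈ S, ∀ x, G.Adj s x → x = u ∨ x = w ∨ x ∈ S ∨ x = f s → s(s, x) ∈ E)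
    (hEK : ∀ k ∈ K, G.Adj k w → s(k, w) ∈ E) : K.ncard ≤ E.ncard := by
  set N := G.neighborSet w
  set ES := {e ∈ E | ∃ s ∈ S, s ∈ e}
  set EK := (fun k => s(k, w)) '' (K ∩ N)
  have hK : K.Finite := finite_of_ncard_pos (by have := hT.three_le_ncard; omega)
  have hES : (K \ N).ncard ≤ ES.ncard := hT.ncard_sdiff_neighborSet_le hG
    (hEfin.subset (sep_subset _ _)) fun s hs x hsx hx =>
      ⟨hE s hs x hsx hx, s, hs, Sym2.mem_mk_left s x⟩
  have hEK_card : EK.ncard = (K ∩ N).ncard :=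
    InjOn.ncard_image fun k _ k' _ h => Sym2.congr_left.mp h
  have hdisj : Disjoint EK ES := by
    rw [Set.disjoint_left]
    rintro _ ⟨k, ⟨hk, -⟩, rfl⟩ ⟨-, s, hs, hsk⟩
    rcases Sym2.mem_iff.mp hsk with rfl | rfl
    exacts [Set.disjoint_left.mp hT.disjoint hs hk, hT.tail_notMem (.inl hs)]
  calc K.ncard = (K ∩ N).ncard + (K \ N).ncard := (ncard_inter_add_ncard_sdiff_eq_ncard K N hK).symm
    _ ≤ EK.ncard + ES.ncard := by omega
    _ = (EK ∪ ES).ncard := (ncard_union_eq hdisj ((hK.inter_of_left N).image _)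
        (hEfin.subset (sep_subset _ _))).symm
    _ ≤ E.ncard := ncard_le_ncard (union_subset
        (by rintro _ ⟨k, ⟨hk, hwk⟩, rfl⟩; exact hEK k hk hwk.symm) (sep_subset _ _)) hEfin

end ContainsTailedThickSpider

lemma addTail_adj_of_ne {G : SimpleGraph α} {u w : α} (h : u ≠ w) : (addTail G u w).Adj u w :=
  Or.inr ⟨rfl, h⟩

lemma mk_mem_edgeSet_sdiff_addTail {G H : SimpleGraph α} {u w x y : α} (hG : G.Adj x y)
    (hH : ¬ H.Adj x y) (hxu : x ≠ u) (hxw : x ≠ w) :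
    s(x, y) ∈ G.edgeSet \ (addTail H u w).edgeSet := by
  refine ⟨hG, fun h => h.elim hH fun ⟨he, _⟩ => ?_⟩
  rcases Sym2.mem_iff.mp ((mem_singleton_iff.mp he) ▸ Sym2.mem_mk_left x y) with h | h
  exacts [hxu h, hxw h]

theorem thickSpider_tail_R_lower_bound_general [Fintype α]
    (H : SimpleGraph α) (u w : α) (S K R : Set α)
    (hspider : ThickSpider H S K R)
    (hcover : S ∪ K ∪ R = {w}ᶜ)
    (hw : ∀ x, ¬ H.Adj w x)
    (hu : u ∈ R) :
    ∀ G' : SimpleGraph α, addTail H u w ≤ G' → IsP4Sparse G' →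
      K.ncard ≤
        ((G'.edgeSet \ (addTail H u w).edgeSet) ∩
          {e : Sym2 α | ∃ x ∈ S ∪ K, x ∈ e}).ncard := by
  intro G hle hG
  obtain ⟨hSind, hKcl, -, hK3, hSK, hSR, hKR, hRK, hRS, f, hf, hfadj⟩ := hspider
  have hHG : H ≤ G := le_sup_left.trans hle
  have hwSK : w ∉ S ∪ K := fun h => (hcover.subset (subset_union_left h) : w ∈ ({w}ᶜ : Set α)) rfl
  have huw : u ≠ w := hcover.subset (subset_union_right hu)
  have huS : u ∉ S := fun h => Set.disjoint_left.mp hSR h hu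
  have hfill : ∀ x ∈ S ∪ K, ∀ y, G.Adj x y → ¬ H.Adj x y → x ≠ u →
      s(x, y) ∈ (G.edgeSet \ (addTail H u w).edgeSet) ∩ {e | ∃ x ∈ S ∪ K, x ∈ e} :=
    fun x hx y hxy hHxy hxu => ⟨mk_mem_edgeSet_sdiff_addTail hxy hHxy hxu
      (ne_of_mem_of_not_mem hx hwSK), x, hx, Sym2.mem_mk_left x y⟩
  refine ContainsTailedThickSpider.ncard_clique_le
    ⟨hf, hK3, fun s hs k hk hne => hHG ((hfadj s hs k hk).mpr hne),
      fun k hk k' hk' hne => hHG (hKcl hk hk' hne), fun k hk => hHG (hRK u hu k hk),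
      (hle (addTail_adj_of_ne huw)).symm, hSK, huS, hwSK⟩ hG (toFinite _) ?_ ?_
  · rintro s hs x hsx hx
    refine hfill s (.inl hs) x hsx ?_ (ne_of_mem_of_not_mem hs huS)
    rcases hx with rfl | rfl | hx | rfl
    exacts [fun h => hRS x hu s hs h.symm, fun h => hw s h.symm, hSind s hs x hx,
      fun h => (hfadj s hs _ (hf.mapsTo hs)).mp h rfl]
  · exact fun k hk hkw => hfill k (.inr hk) w hkw (fun h => hw k h.symm)
      fun h => Set.disjoint_left.mp hKR hk (h ▸ hu)

/-- tail at `u ∈ R` of a thick spider: every P₄-sparse completion of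
`H+uw` has at least `|K|` fill edges with an endpoint in `S ∪ K`. -/
theorem thickSpider_tail_R_lower_bound [Fintype α]
    (H : SimpleGraph α) (u w : α) (S K R : Set α)
    (hspider : ThickSpider H S K R)
    (hcover : S ∪ K ∪ R = {w}ᶜ)
    (hw : ∀ x, ¬ H.Adj w x)
    (hRsparse : IsP4Sparse (restrictSet H R)) (hu : u ∈ R) :
    ∀ G' : SimpleGraph α, addTail H u w ≤ G' → IsP4Sparse G' →
      K.ncard ≤
        ((G'.edgeSet \ (addTail H u w).edgeSet) ∩
          {e : Sym2 α | ∃ x ∈ S ∪ K, x ∈ e}).ncard :=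
  thickSpider_tail_R_lower_bound_general H u w S K R hspider hcover hw hu
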